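/- arXiv:2603.19657 — 3 statements merged into one kernel-verified Lean document; each statement's English description precedes it below -/
import Mathlib

section
/- Let V be the k×k Vandermonde matrix with distinct nodes x_1, ..., x_k ∈ C, where V_{ij} = x_j^{i-1}. Then the infinity operator norm of V^{-1} satisfies ||V^{-1}||_∞ ≤ max_{1≤j≤k} ∏_{i≠j} (1 + |x_i|)/|x_i - x_j|. -/
open Finset Polynomial

noncomputable def L1 (p : ℂ[X]) : ℝ := ∑ n ∈ p.support, ‖p.coeff n‖

lemma L1_nonneg (p : ℂ[X]) : 0 ≤ L1 p :=
  Finset.sum_nonneg fun _ _ => norm_nonneg _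

lemma L1_eq_range {p : ℂ[X]} {N : ℕ} (h : p.support ⊆ Finset.range N) :
    L1 p = ∑ n ∈ Finset.range N, ‖p.coeff n‖ := by
  refine Finset.sum_subset h fun n _ hn => ?_
  simp [Polynomial.notMem_support_iff.mp hn]

lemma L1_one : L1 (1 : ℂ[X]) = 1 := by
  rw [L1_eq_range (N := 1) (fun n hn => by
    have := Polynomial.le_natDegree_of_mem_supp n hn
    simp only [Polynomial.natDegree_one, Nat.le_zero] at this
    simp [this])]
  simp

lemma L1_mul_le (p q : ℂ[X]) : L1 (p * q) ≤ L1 p * L1 q := by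
  classical
  set K := p.natDegree + q.natDegree + 1 with hK
  have hsub : (p * q).support ⊆ Finset.range K := by
    intro n hn
    have := Polynomial.le_natDegree_of_mem_supp n hn
    have := Polynomial.natDegree_mul_le (p := p) (q := q)
    simp only [Finset.mem_range]; omega
  rw [L1_eq_range hsub]
  have step1 : ∑ n ∈ Finset.range K, ‖(p * q).coeff n‖ ≤
      ∑ n ∈ Finset.range K, ∑ ab ∈ Finset.HasAntidiagonal.antidiagonal n,
        ‖p.coeff ab.1‖ * ‖q.coeff ab.2‖ := by
    refine Finset.sum_le_sum fun n _ => ?_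
    rw [Polynomial.coeff_mul]
    refine le_trans (norm_sum_le _ _) ?_
    refine le_of_eq (Finset.sum_congr rfl fun ab _ => ?_)
    exact norm_mul _ _
  refine le_trans step1 ?_
  have hdisj : ((Finset.range K : Finset ℕ) : Set ℕ).PairwiseDisjoint
      (fun n => (Finset.HasAntidiagonal.antidiagonal n : Finset (ℕ × ℕ))) := by
    intro a _ b _ hab
    simp only [Finset.disjoint_left]
    intro x hx hx'
    exact hab ((Finset.HasAntidiagonal.mem_antidiagonal.mp hx).symm.trans (Finset.HasAntidiagonal.mem_antidiagonal.mp hx'))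
  rw [← Finset.sum_biUnion hdisj]
  have key : ∑ ab ∈ (Finset.range K).biUnion (fun n => Finset.HasAntidiagonal.antidiagonal n),
      ‖p.coeff ab.1‖ * ‖q.coeff ab.2‖
      = ∑ ab ∈ p.support ×ˢ q.support,
      ‖p.coeff ab.1‖ * ‖q.coeff ab.2‖ := by
    rw [eq_comm]
    refine Finset.sum_subset ?_ ?_
    · intro ab hab
      simp only [Finset.mem_product] at hab
      simp only [Finset.mem_biUnion, Finset.mem_range, Finset.HasAntidiagonal.mem_antidiagonal]
      refine ⟨ab.1 + ab.2, ?_, rfl⟩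
      have h1 := Polynomial.le_natDegree_of_mem_supp _ hab.1
      have h2 := Polynomial.le_natDegree_of_mem_supp _ hab.2
      omega
    · intro ab _ hab
      simp only [Finset.mem_product, not_and_or, Polynomial.notMem_support_iff] at hab
      rcases hab with h | h <;> simp [h]
  rw [key, L1, L1, Finset.sum_mul_sum]
  rw [Finset.sum_product]

lemma L1_prod_le {ι : Type*} (s : Finset ι) (f : ι → ℂ[X]) :
    L1 (∏ m ∈ s, f m) ≤ ∏ m ∈ s, L1 (f m) := by
  classical
  induction s using Finset.cons_induction with
  | empty => simp [L1_one]
  | cons a s ha ih =>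
    rw [Finset.prod_cons, Finset.prod_cons]
    refine le_trans (L1_mul_le _ _) ?_
    exact mul_le_mul_of_nonneg_left ih (L1_nonneg _)

lemma L1_basisDivisor (a b : ℂ) (hab : a ≠ b) :
    L1 (Lagrange.basisDivisor a b) = (1 + ‖b‖) / ‖a - b‖ := by
  have hsub : (Lagrange.basisDivisor a b).support ⊆ Finset.range 2 := by
    intro n hn
    have h := Polynomial.le_natDegree_of_mem_supp n hn
    rw [Lagrange.natDegree_basisDivisor_of_ne hab] at h
    simp only [Finset.mem_range]; omega
  rw [L1_eq_range hsub]
  have h0 : (Lagrange.basisDivisor a b).coeff 0 = (a - b)⁻¹ * (-b) := by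
    simp [Lagrange.basisDivisor, Polynomial.coeff_mul_C, mul_comm]
  have h1 : (Lagrange.basisDivisor a b).coeff 1 = (a - b)⁻¹ := by
    simp [Lagrange.basisDivisor]
  rw [Finset.sum_range_succ, Finset.sum_range_one, h0, h1]
  rw [norm_mul, norm_inv, norm_neg]
  have hne : ‖a - b‖ ≠ 0 := by
    simp [sub_eq_zero, hab]
  field_simp
  ring

theorem vandermonde_inverse_infty_norm (k : ℕ) (hk : 0 < k) (x : Fin k → ℂ)
    (hx : Function.Injective x) (V : Matrix (Fin k) (Fin k) ℂ)
    (hV : ∀ i j, V i j = x j ^ (i : ℕ)) (i : Fin k) :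
    ∑ j, ‖V⁻¹ i j‖ ≤
      univ.sup' (univ_nonempty_iff.mpr ⟨⟨0, hk⟩⟩)
        (fun j => ∏ m ∈ univ.erase j, (1 + ‖x m‖) / ‖x m - x j‖) := by
  classical
  have hinj : Set.InjOn x (Finset.univ : Finset (Fin k)) := hx.injOn
  set ℓ : Fin k → ℂ[X] := fun j => Lagrange.basis Finset.univ x j with hℓ
  have hdeg : ∀ j, (ℓ j).natDegree < k := by
    intro j
    rw [hℓ, Lagrange.natDegree_basis hinj (Finset.mem_univ j)]
    have : (Finset.univ.erase j).card < Finset.univ.card :=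
      Finset.card_erase_lt_of_mem (Finset.mem_univ j)
    simpa using this
  -- the matrix of coefficients of Lagrange basis polynomials
  set W : Matrix (Fin k) (Fin k) ℂ := fun a b => (ℓ a).coeff b with hW
  have hWV : W * V = 1 := by
    ext a b
    rw [Matrix.mul_apply]; simp only [hW]
    have heq : ∀ n : Fin k, (ℓ a).coeff n * V n b = (ℓ a).coeff n * x b ^ (n : ℕ) := by
      intro n; rw [hV]
    rw [Finset.sum_congr rfl fun n _ => heq n,
      Fin.sum_univ_eq_sum_range (fun n => (ℓ a).coeff n * x b ^ n),
      ← Polynomial.eval_eq_sum_range' (hdeg a)]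
    rcases eq_or_ne a b with h | h
    · subst h
      rw [Lagrange.eval_basis_self hinj (Finset.mem_univ a), Matrix.one_apply_eq]
    · rw [Lagrange.eval_basis_of_ne h (Finset.mem_univ b), Matrix.one_apply_ne h]
  have hVinv : V⁻¹ = W := Matrix.inv_eq_left_inv hWV
  have hsum : ∑ j, ‖V⁻¹ i j‖ = L1 (ℓ i) := by
    rw [hVinv]
    rw [L1_eq_range (N := k) (fun n hn => by
      have := Polynomial.le_natDegree_of_mem_supp n hn
      have := hdeg i
      simp only [Finset.mem_range]; omega)]
    simp only [hW]
    exact Fin.sum_univ_eq_sum_range (fun n => ‖(ℓ i).coeff n‖) k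
  rw [hsum]
  have hle : L1 (ℓ i) ≤ ∏ m ∈ Finset.univ.erase i,
      (1 + ‖x m‖) / ‖x m - x i‖ := by
    refine le_trans (L1_prod_le _ _) (le_of_eq (Finset.prod_congr rfl fun m hm => ?_))
    have hmi : x i ≠ x m := by
      intro h
      exact (Finset.mem_erase.mp hm).1 (hx h).symm
    rw [L1_basisDivisor _ _ hmi, norm_sub_rev]
  refine le_trans hle ?_
  exact Finset.le_sup' (fun j => ∏ m ∈ Finset.univ.erase j,
    (1 + ‖x m‖) / ‖x m - x j‖) (Finset.mem_univ i)
end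

section
/- Let V be an invertible k×k complex Vandermonde matrix with nodes e^{ιθ_1}, ..., e^{ιθ_k} on the unit circle, where the θ_j are real numbers satisfying |θ_j - θ_m| ≤ π and |θ_j - θ_m| ≥ s > 0 for all j ≠ m. Then the smallest singular value satisfies σ_k(V) ≥ (1/√k)·(s/π)^{k-1}. -/
open Polynomial Finset

private lemma l1_coeff_bound {ι : Type*} [DecidableEq ι] (w : ι → ℂ) (t : Finset ι)
    (hw : ∀ m, ‖w m‖ ≤ 1) :
    ∑ i ∈ Finset.range (t.card + 1), ‖(∏ m ∈ t, (X - C (w m))).coeff i‖ ≤ 2 ^ t.card := by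
  induction t using Finset.induction_on with
  | empty => simp
  | @insert a u ha ih =>
    rw [Finset.prod_insert ha, Finset.card_insert_of_notMem ha]
    set P := ∏ m ∈ u, (X - C (w m)) with hP
    have hdeg : P.natDegree ≤ u.card := by
      refine le_trans (Polynomial.natDegree_prod_le _ _) ?_
      simp [Polynomial.natDegree_X_sub_C]
    have key : ∀ i, ‖((X - C (w a)) * P).coeff i‖ ≤ ‖(X * P).coeff i‖ + ‖P.coeff i‖ := by
      intro i
      have h : ((X - C (w a)) * P).coeff i = (X * P).coeff i - w a * P.coeff i := by
        rw [sub_mul, Polynomial.coeff_sub, Polynomial.coeff_C_mul]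
      rw [h]
      refine (norm_sub_le _ _).trans ?_
      gcongr
      rw [norm_mul]
      exact mul_le_of_le_one_left (norm_nonneg _) (hw a)
    calc ∑ i ∈ Finset.range (u.card + 1 + 1), ‖((X - C (w a)) * P).coeff i‖
        ≤ ∑ i ∈ Finset.range (u.card + 1 + 1), (‖(X * P).coeff i‖ + ‖P.coeff i‖) :=
          Finset.sum_le_sum fun i _ => key i
      _ = (∑ i ∈ Finset.range (u.card + 1 + 1), ‖(X * P).coeff i‖)
            + ∑ i ∈ Finset.range (u.card + 1 + 1), ‖P.coeff i‖ := Finset.sum_add_distrib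
      _ ≤ 2 ^ u.card + 2 ^ u.card := by
          gcongr
          · rw [Finset.sum_range_succ']
            simp only [Polynomial.coeff_X_mul]
            have h0 : (X * P).coeff 0 = 0 := by
              simp [Polynomial.mul_coeff_zero]
            rw [h0, norm_zero, add_zero]
            exact ih
          · rw [Finset.sum_range_succ]
            have h0 : P.coeff (u.card + 1) = 0 :=
              Polynomial.coeff_eq_zero_of_natDegree_lt (by omega)
            rw [h0, norm_zero, add_zero]
            exact ih
      _ = 2 ^ (u.card + 1) := by ring

private lemma norm_exp_mul_I_sub_one (t : ℝ) :
    ‖Complex.exp (t * Complex.I) - 1‖ = 2 * |Real.sin (t / 2)| := by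
  have h : Complex.exp (t * Complex.I) - 1 =
      ((Real.cos t - 1 : ℝ) : ℂ) + ((Real.sin t : ℝ) : ℂ) * Complex.I := by
    rw [Complex.exp_mul_I]
    push_cast
    ring
  rw [h, Complex.norm_add_mul_I, Real.abs_sin_half]
  rw [show (Real.cos t - 1) ^ 2 + Real.sin t ^ 2 = 4 * ((1 - Real.cos t) / 2) by
    nlinarith [Real.sin_sq_add_cos_sq t]]
  rw [Real.sqrt_mul (by norm_num : (0:ℝ) ≤ 4)]
  rw [show (4:ℝ) = 2 ^ 2 by norm_num, Real.sqrt_sq (by norm_num : (0:ℝ) ≤ 2)]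

theorem vandermonde_min_singular_value (k : ℕ) (hk : 0 < k) (θ : Fin k → ℝ)
    (V : Matrix (Fin k) (Fin k) ℂ)
    (hV : ∀ i j, V i j = Complex.exp (θ j * Complex.I) ^ (i : ℕ))
    (hVinv : IsUnit V.det)
    (s : ℝ) (hs : 0 < s)
    (hsep₁ : ∀ j m, j ≠ m → |θ j - θ m| ≤ Real.pi)
    (hsep₂ : ∀ j m, j ≠ m → s ≤ |θ j - θ m|) :
    ∀ v : EuclideanSpace ℂ (Fin k),
      (1 / Real.sqrt k) * (s / Real.pi) ^ (k - 1) * ‖v‖ ≤ ‖Matrix.toEuclideanLin V v‖ := by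
  intro v
  have hπ : 0 < Real.pi := Real.pi_pos
  set z : Fin k → ℂ := fun j => Complex.exp (θ j * Complex.I) with hzdef
  have hznorm : ∀ j, ‖z j‖ = 1 := fun j => by
    simp [hzdef, Complex.norm_exp_ofReal_mul_I]
  -- injectivity of nodes
  have hinj : Function.Injective z := by
    intro j m hjm
    by_contra hne
    rw [Complex.exp_eq_exp_iff_exists_int] at hjm
    obtain ⟨n, hn⟩ := hjm
    have him := congrArg Complex.im hn
    simp at him
    have habs₁ := hsep₁ j m hne
    have habs₂ := hsep₂ j m hne
    have hθ : θ j - θ m = n * (2 * Real.pi) := by linarith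
    rcases eq_or_ne n 0 with h0 | h0
    · rw [h0] at hθ; simp at hθ
      rw [hθ] at habs₂; simp at habs₂; linarith
    · have h1 : (1 : ℝ) ≤ |(n : ℝ)| := by
        have := Int.one_le_abs (h0 : n ≠ 0)
        exact_mod_cast this
      have h2 : 2 * Real.pi ≤ |θ j - θ m| := by
        rw [hθ, abs_mul, abs_of_pos (by positivity : (0:ℝ) < 2 * Real.pi)]
        nlinarith
      linarith
  have hinjon : Set.InjOn z (Finset.univ : Finset (Fin k)) := fun a _ b _ h => hinj h
  -- chord lower bound
  have hchord : ∀ j m, j ≠ m → 2 * s / Real.pi ≤ ‖z j - z m‖ := by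
    intro j m hjm
    have hfac : z j - z m = z m * (Complex.exp ((θ j - θ m : ℝ) * Complex.I) - 1) := by
      simp only [hzdef]
      rw [mul_sub, ← Complex.exp_add]
      push_cast
      ring_nf
    rw [hfac, norm_mul, hznorm, one_mul, norm_exp_mul_I_sub_one]
    set t := θ j - θ m with ht
    have h1 : s ≤ |t| := hsep₂ j m hjm
    have h2 : |t| ≤ Real.pi := hsep₁ j m hjm
    have habs : |Real.sin (t / 2)| = |Real.sin (|t| / 2)| := by
      rw [Real.abs_sin_half, Real.abs_sin_half, Real.cos_abs]
    have hjordan : 2 / Real.pi * (|t| / 2) ≤ Real.sin (|t| / 2) :=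
      Real.mul_le_sin (by positivity) (by linarith)
    have heq : 2 / Real.pi * (|t| / 2) = |t| / Real.pi := by ring
    rw [heq] at hjordan
    have h3 : s / Real.pi ≤ |t| / Real.pi := by gcongr
    have h4 := le_abs_self (Real.sin (|t| / 2))
    rw [habs]
    calc 2 * s / Real.pi = 2 * (s / Real.pi) := by ring
      _ ≤ 2 * |Real.sin (|t| / 2)| := by linarith
  -- the Lagrange inverse
  set L : Matrix (Fin k) (Fin k) ℂ :=
    Matrix.of (fun j i => (Lagrange.basis Finset.univ z j).coeff (i : ℕ)) with hLdef
  have hdegL : ∀ j, (Lagrange.basis Finset.univ z j).natDegree < k := by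
    intro j
    rw [Lagrange.natDegree_basis hinjon (Finset.mem_univ j)]
    simp only [Finset.card_univ, Fintype.card_fin]
    omega
  have hLV : L * V = 1 := by
    ext j m
    rw [Matrix.mul_apply]
    simp only [hLdef, Matrix.of_apply, hV]
    have he : (Lagrange.basis Finset.univ z j).eval (z m)
        = ∑ i : Fin k, (Lagrange.basis Finset.univ z j).coeff (i : ℕ) * z m ^ (i : ℕ) := by
      rw [Polynomial.eval_eq_sum_range' (hdegL j) (z m)]
      exact (Fin.sum_univ_eq_sum_range
        (fun i => (Lagrange.basis Finset.univ z j).coeff i * z m ^ i) k).symm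
    rw [← he]
    rcases eq_or_ne j m with rfl | hjm
    · rw [Lagrange.eval_basis_self hinjon (Finset.mem_univ j), Matrix.one_apply_eq]
    · rw [Lagrange.eval_basis_of_ne hjm (Finset.mem_univ m), Matrix.one_apply_ne hjm]
  -- row sum bound
  have hrow : ∀ j, ∑ i : Fin k, ‖L j i‖ ≤ (Real.pi / s) ^ (k - 1) := by
    intro j
    have hbasis : Lagrange.basis Finset.univ z j =
        C (∏ m ∈ Finset.univ.erase j, (z j - z m)⁻¹)
          * ∏ m ∈ Finset.univ.erase j, (X - C (z m)) := by
      rw [Lagrange.basis, map_prod, ← Finset.prod_mul_distrib]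
      rfl
    have hcard : (Finset.univ.erase j).card = k - 1 := by
      rw [Finset.card_erase_of_mem (Finset.mem_univ j)]
      simp
    have hterm : ∀ m ∈ Finset.univ.erase j, ‖(z j - z m)⁻¹‖ ≤ Real.pi / (2 * s) := by
      intro m hm
      have hjm : j ≠ m := fun h => (Finset.mem_erase.mp hm).1 h.symm
      have hch := hchord j m hjm
      have hpos : (0:ℝ) < 2 * s / Real.pi := by positivity
      rw [norm_inv]
      calc ‖z j - z m‖⁻¹ ≤ (2 * s / Real.pi)⁻¹ := by
            apply inv_anti₀ hpos hch
        _ = Real.pi / (2 * s) := by rw [inv_div]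
    have hcnorm : ‖∏ m ∈ Finset.univ.erase j, (z j - z m)⁻¹‖
        ≤ (Real.pi / (2 * s)) ^ (k - 1) := by
      rw [norm_prod]
      refine le_trans (Finset.prod_le_prod (fun m _ => norm_nonneg _) hterm) ?_
      rw [Finset.prod_const, hcard]
    have hsum : ∑ i : Fin k, ‖L j i‖
        ≤ ‖∏ m ∈ Finset.univ.erase j, (z j - z m)⁻¹‖ * 2 ^ (k - 1) := by
      have hLe : ∀ i : Fin k, ‖L j i‖ = ‖∏ m ∈ Finset.univ.erase j, (z j - z m)⁻¹‖
          * ‖(∏ m ∈ Finset.univ.erase j, (X - C (z m))).coeff (i : ℕ)‖ := by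
        intro i
        simp only [hLdef, Matrix.of_apply, hbasis, Polynomial.coeff_C_mul, norm_mul]
      rw [Finset.sum_congr rfl (fun i _ => hLe i), ← Finset.mul_sum]
      refine mul_le_mul_of_nonneg_left ?_ (norm_nonneg _)
      have hrange : k = (Finset.univ.erase j).card + 1 := by rw [hcard]; omega
      calc ∑ i : Fin k, ‖(∏ m ∈ Finset.univ.erase j, (X - C (z m))).coeff (i : ℕ)‖
          = ∑ i ∈ Finset.range ((Finset.univ.erase j).card + 1),
              ‖(∏ m ∈ Finset.univ.erase j, (X - C (z m))).coeff i‖ := by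
            rw [← hrange]
            exact Fin.sum_univ_eq_sum_range
              (fun i => ‖(∏ m ∈ Finset.univ.erase j, (X - C (z m))).coeff i‖) k
        _ ≤ 2 ^ (Finset.univ.erase j).card :=
            l1_coeff_bound z _ (fun m => le_of_eq (hznorm m))
        _ = 2 ^ (k - 1) := by rw [hcard]
    refine hsum.trans ?_
    calc ‖∏ m ∈ Finset.univ.erase j, (z j - z m)⁻¹‖ * 2 ^ (k - 1)
        ≤ (Real.pi / (2 * s)) ^ (k - 1) * 2 ^ (k - 1) := by gcongr
      _ = (Real.pi / s) ^ (k - 1) := by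
          rw [← mul_pow]
          congr 1
          field_simp
  -- operator norm bound for L
  set R := (Real.pi / s) ^ (k - 1) with hRdef
  have hR0 : 0 < R := by positivity
  have hopL : ∀ x : EuclideanSpace ℂ (Fin k),
      ‖Matrix.toEuclideanLin L x‖ ≤ Real.sqrt k * R * ‖x‖ := by
    intro x
    have hnormsq : ‖Matrix.toEuclideanLin L x‖ ^ 2 ≤ (k : ℝ) * R ^ 2 * ‖x‖ ^ 2 := by
      rw [EuclideanSpace.norm_eq, Real.sq_sqrt (by positivity), EuclideanSpace.norm_eq,
        Real.sq_sqrt (by positivity)]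
      calc ∑ j : Fin k, ‖(Matrix.toEuclideanLin L x) j‖ ^ 2
          ≤ ∑ j : Fin k, (∑ i : Fin k, ‖L j i‖) * (∑ i : Fin k, ‖L j i‖ * ‖x i‖ ^ 2) := by
            refine Finset.sum_le_sum fun j _ => ?_
            have h1 : ‖(Matrix.toEuclideanLin L x) j‖ ≤ ∑ i : Fin k, ‖L j i‖ * ‖x i‖ := by
              have hentry : (Matrix.toEuclideanLin L x) j = ∑ i : Fin k, L j i * x i := by
                rw [Matrix.toEuclideanLin_apply]
                rfl
              rw [hentry]
              refine (norm_sum_le _ _).trans ?_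
              refine Finset.sum_le_sum fun i _ => ?_
              rw [norm_mul]
            refine le_trans (pow_le_pow_left₀ (norm_nonneg _) h1 2) ?_
            exact Finset.sum_sq_le_sum_mul_sum_of_sq_eq_mul Finset.univ
              (fun i _ => norm_nonneg _)
              (fun i _ => by positivity)
              (fun i _ => by ring)
        _ ≤ ∑ j : Fin k, R * (∑ i : Fin k, ‖L j i‖ * ‖x i‖ ^ 2) := by
            refine Finset.sum_le_sum fun j _ => ?_
            refine mul_le_mul_of_nonneg_right (hrow j) ?_
            exact Finset.sum_nonneg fun i _ => by positivity
        _ = R * ∑ i : Fin k, (∑ j : Fin k, ‖L j i‖) * ‖x i‖ ^ 2 := by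
            rw [← Finset.mul_sum, Finset.sum_comm]
            congr 1
            refine Finset.sum_congr rfl fun i _ => ?_
            rw [Finset.sum_mul]
        _ ≤ R * ∑ i : Fin k, ((k : ℝ) * R) * ‖x i‖ ^ 2 := by
            refine mul_le_mul_of_nonneg_left (Finset.sum_le_sum fun i _ => ?_) hR0.le
            refine mul_le_mul_of_nonneg_right ?_ (by positivity)
            calc ∑ j : Fin k, ‖L j i‖ ≤ ∑ j : Fin k, R :=
                  Finset.sum_le_sum fun j _ =>
                    le_trans (Finset.single_le_sum (fun i' _ => norm_nonneg (L j i'))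
                      (Finset.mem_univ i)) (hrow j)
              _ = (k : ℝ) * R := by simp [mul_comm]
        _ = (k : ℝ) * R ^ 2 * ∑ i : Fin k, ‖x i‖ ^ 2 := by
            rw [← Finset.mul_sum]
            ring
    have hsq : (Real.sqrt k * R * ‖x‖) ^ 2 = ((k : ℝ)) * R ^ 2 * ‖x‖ ^ 2 := by
      have hkk : Real.sqrt k ^ 2 = (k : ℝ) := Real.sq_sqrt (Nat.cast_nonneg k)
      rw [mul_pow, mul_pow, hkk]
    have h1 : ‖Matrix.toEuclideanLin L x‖ ≤ Real.sqrt ((Real.sqrt k * R * ‖x‖) ^ 2) := by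
      rw [show ‖Matrix.toEuclideanLin L x‖ = Real.sqrt (‖Matrix.toEuclideanLin L x‖ ^ 2) by
        rw [Real.sqrt_sq (norm_nonneg _)]]
      exact Real.sqrt_le_sqrt (le_of_le_of_eq hnormsq hsq.symm)
    rwa [Real.sqrt_sq (by positivity)] at h1
  -- conclude
  have hv : v = Matrix.toEuclideanLin L (Matrix.toEuclideanLin V v) := by
    rw [Matrix.toEuclideanLin_apply, Matrix.toEuclideanLin_apply]
    simp [Matrix.mulVec_mulVec, hLV]
  have hkey : ‖v‖ ≤ Real.sqrt k * R * ‖Matrix.toEuclideanLin V v‖ := by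
    conv_lhs => rw [hv]
    exact hopL _
  have hks : (0:ℝ) < Real.sqrt k := Real.sqrt_pos.mpr (by exact_mod_cast hk)
  have hps : (s / Real.pi) ^ (k - 1) * (Real.pi / s) ^ (k - 1) = 1 := by
    rw [← mul_pow, div_mul_div_comm,
      show s * Real.pi / (Real.pi * s) = 1 by field_simp, one_pow]
  have hcancel : (1 / Real.sqrt k) * (s / Real.pi) ^ (k - 1) * (Real.sqrt k * R) = 1 := by
    have hre : (1 / Real.sqrt k) * (s / Real.pi) ^ (k - 1) * (Real.sqrt k * R)
        = ((s / Real.pi) ^ (k - 1) * (Real.pi / s) ^ (k - 1))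
          * (Real.sqrt k / Real.sqrt k) := by
      rw [hRdef]; ring
    rw [hre, hps, div_self (ne_of_gt hks), one_mul]
  calc (1 / Real.sqrt k) * (s / Real.pi) ^ (k - 1) * ‖v‖
      ≤ (1 / Real.sqrt k) * (s / Real.pi) ^ (k - 1)
          * (Real.sqrt k * R * ‖Matrix.toEuclideanLin V v‖) := by
        gcongr
    _ = ‖Matrix.toEuclideanLin V v‖ := by
        rw [← mul_assoc, hcancel, one_mul]
end

section
/- Let C, Ĉ ∈ C^{L×L} be Hermitian positive semidefinite with rank(C) = k < L and Ê = Ĉ - C. Let σ_1 ≥ ... ≥ σ_L and σ̂_1 ≥ ... ≥ σ̂_L denote the eigenvalues of C and Ĉ respectively. If ||Ê||_2 < σ_k/2 then σ̂_k > ||Ê||_2 ≥ σ̂_{k+1}; in particular the eigenvalue-ratio estimator k̂ with σ̂_{k̂}/σ̂_{k̂+1} maximal over indices with σ̂_i > σ_k/2 recovers k whenever additionally σ̂_{k+1} > 0 and (σ_k - ||Ê||_2)/||Ê||_2 > (σ_i + ||Ê||_2)/(σ_{i+1} - ||Ê||_2) for all i < k. -/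
open scoped ComplexOrder

/-- The spectral (ℓ²-operator) norm of a square complex matrix. -/
noncomputable def specNorm {n : ℕ} (A : Matrix (Fin n) (Fin n) ℂ) : ℝ :=
  ‖LinearMap.toContinuousLinearMap (Matrix.toEuclideanLin A)‖

section aux
variable {n : ℕ} {A : Matrix (Fin n) (Fin n) ℂ} (hA : A.IsHermitian)

lemma toEuclideanLin_eigen (j : Fin n) :
    Matrix.toEuclideanLin A (hA.eigenvectorBasis j) = (hA.eigenvalues j : ℂ) • hA.eigenvectorBasis j := by
  ext i
  have h := congrFun (hA.mulVec_eigenvectorBasis j) i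
  simpa [Matrix.toEuclideanLin_apply, Matrix.mulVec] using h

lemma repr_toEuclideanLin (x : EuclideanSpace ℂ (Fin n)) (j : Fin n) :
    hA.eigenvectorBasis.repr (Matrix.toEuclideanLin A x) j
      = (hA.eigenvalues j : ℂ) * hA.eigenvectorBasis.repr x j := by
  rw [hA.eigenvectorBasis.repr_apply_apply, hA.eigenvectorBasis.repr_apply_apply]
  have hsym : (Matrix.toEuclideanLin A).IsSymmetric := (Matrix.isHermitian_iff_isSymmetric).mp hA
  rw [← hsym (hA.eigenvectorBasis j) x, toEuclideanLin_eigen hA j]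
  simp [inner_smul_left, Finset.mul_sum, mul_assoc]

lemma re_inner_toEuclideanLin (x : EuclideanSpace ℂ (Fin n)) :
    RCLike.re (inner ℂ x (Matrix.toEuclideanLin A x) : ℂ)
      = ∑ j, hA.eigenvalues j * ‖hA.eigenvectorBasis.repr x j‖ ^ 2 := by
  rw [← LinearIsometryEquiv.inner_map_map hA.eigenvectorBasis.repr]
  rw [PiLp.inner_apply]
  rw [map_sum]
  congr 1; ext j
  rw [RCLike.inner_apply]
  rw [repr_toEuclideanLin hA x j]
  have : (hA.eigenvalues j : ℂ) * hA.eigenvectorBasis.repr x j * (starRingEnd ℂ) (hA.eigenvectorBasis.repr x j)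
      = (hA.eigenvalues j : ℂ) * ((starRingEnd ℂ) (hA.eigenvectorBasis.repr x j) * hA.eigenvectorBasis.repr x j) := by ring
  rw [this, Complex.conj_mul']
  simp [← Complex.ofReal_pow, ← Complex.ofReal_mul]

lemma norm_sq_eq_sum_repr (x : EuclideanSpace ℂ (Fin n)) :
    ‖x‖ ^ 2 = ∑ j, ‖(hA.eigenvectorBasis.repr x) j‖ ^ 2 := by
  rw [← hA.eigenvectorBasis.repr.norm_map x, EuclideanSpace.norm_eq]
  rw [Real.sq_sqrt (by positivity)]

end aux

section weyl
variable {n : ℕ}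

lemma mem_span_eigen_iff {A : Matrix (Fin n) (Fin n) ℂ} (hA : A.IsHermitian) (S : Finset (Fin n))
    (x : EuclideanSpace ℂ (Fin n)) :
    x ∈ Submodule.span ℂ (hA.eigenvectorBasis '' (S : Set (Fin n))) ↔
      ∀ j ∉ S, hA.eigenvectorBasis.repr x j = 0 := by
  have hb : ⇑hA.eigenvectorBasis = ⇑hA.eigenvectorBasis.toBasis := by
    simp
  rw [hb, Module.Basis.mem_span_image]
  constructor
  · intro h j hj
    by_contra hne
    exact hj (h (by simpa [Finsupp.mem_support_iff, OrthonormalBasis.coe_toBasis_repr_apply] using hne))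
  · intro h j hj
    simp only [Finset.mem_coe, Finsupp.mem_support_iff] at hj
    by_contra hjS
    exact hj (by simpa [OrthonormalBasis.coe_toBasis_repr_apply] using h j hjS)

lemma finrank_span_eigen {A : Matrix (Fin n) (Fin n) ℂ} (hA : A.IsHermitian) (S : Finset (Fin n)) :
    Module.finrank ℂ (Submodule.span ℂ (hA.eigenvectorBasis '' (S : Set (Fin n)))) = S.card := by
  classical
  have hli : LinearIndependent ℂ (fun j : (S : Set (Fin n)) => hA.eigenvectorBasis j) :=
    hA.eigenvectorBasis.orthonormal.linearIndependent.comp _ Subtype.coe_injective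
  have hr : Set.range (fun j : (S : Set (Fin n)) => hA.eigenvectorBasis j)
      = hA.eigenvectorBasis '' (S : Set (Fin n)) := by
    ext y; simp
  have := finrank_span_eq_card (R := ℂ) hli
  rw [hr] at this
  rw [this]
  simp

lemma exists_nonzero_inter {A B : Matrix (Fin n) (Fin n) ℂ} (hA : A.IsHermitian)
    (hB : B.IsHermitian) (S T : Finset (Fin n)) (hcard : n < S.card + T.card) :
    ∃ x : EuclideanSpace ℂ (Fin n), x ≠ 0 ∧
      x ∈ Submodule.span ℂ (hA.eigenvectorBasis '' (S : Set (Fin n))) ∧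
      x ∈ Submodule.span ℂ (hB.eigenvectorBasis '' (T : Set (Fin n))) := by
  let s := Submodule.span ℂ (hA.eigenvectorBasis '' (S : Set (Fin n)))
  let t := Submodule.span ℂ (hB.eigenvectorBasis '' (T : Set (Fin n)))
  have hsum := Submodule.finrank_sup_add_finrank_inf_eq s t
  have hs : Module.finrank ℂ ↥s = S.card := finrank_span_eigen hA S
  have ht : Module.finrank ℂ ↥t = T.card := finrank_span_eigen hB T
  have hsup : Module.finrank ℂ ↥(s ⊔ t) ≤ n := by
    simpa [finrank_euclideanSpace] using Submodule.finrank_le (s ⊔ t)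
  have hpos : 0 < Module.finrank ℂ ↥(s ⊓ t) := by omega
  obtain ⟨⟨x, hx⟩, hxne⟩ := Module.finrank_pos_iff_exists_ne_zero.mp hpos
  exact ⟨x, by simpa using hxne, (Submodule.mem_inf.mp hx).1, (Submodule.mem_inf.mp hx).2⟩

lemma quad_ge {A : Matrix (Fin n) (Fin n) ℂ} (hA : A.IsHermitian) (S : Finset (Fin n))
    (c : ℝ) (hc : ∀ j ∈ S, c ≤ hA.eigenvalues j) (x : EuclideanSpace ℂ (Fin n))
    (hx : x ∈ Submodule.span ℂ (hA.eigenvectorBasis '' (S : Set (Fin n)))) :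
    c * ‖x‖ ^ 2 ≤ RCLike.re (inner ℂ x (Matrix.toEuclideanLin A x) : ℂ) := by
  rw [re_inner_toEuclideanLin hA x, norm_sq_eq_sum_repr hA x, Finset.mul_sum]
  apply Finset.sum_le_sum
  intro j _
  by_cases hj : j ∈ S
  · exact mul_le_mul_of_nonneg_right (hc j hj) (by positivity)
  · rw [(mem_span_eigen_iff hA S x).mp hx j hj]
    simp

lemma quad_le {A : Matrix (Fin n) (Fin n) ℂ} (hA : A.IsHermitian) (S : Finset (Fin n))
    (c : ℝ) (hc : ∀ j ∈ S, hA.eigenvalues j ≤ c) (x : EuclideanSpace ℂ (Fin n))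
    (hx : x ∈ Submodule.span ℂ (hA.eigenvectorBasis '' (S : Set (Fin n)))) :
    RCLike.re (inner ℂ x (Matrix.toEuclideanLin A x) : ℂ) ≤ c * ‖x‖ ^ 2 := by
  rw [re_inner_toEuclideanLin hA x, norm_sq_eq_sum_repr hA x, Finset.mul_sum]
  apply Finset.sum_le_sum
  intro j _
  by_cases hj : j ∈ S
  · exact mul_le_mul_of_nonneg_right (hc j hj) (by positivity)
  · rw [(mem_span_eigen_iff hA S x).mp hx j hj]
    simp

lemma quad_specNorm (M : Matrix (Fin n) (Fin n) ℂ) (x : EuclideanSpace ℂ (Fin n)) :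
    RCLike.re (inner ℂ x (Matrix.toEuclideanLin M x) : ℂ) ≤ specNorm M * ‖x‖ ^ 2 := by
  have h1 : RCLike.re (inner ℂ x (Matrix.toEuclideanLin M x) : ℂ)
      ≤ ‖(inner ℂ x (Matrix.toEuclideanLin M x) : ℂ)‖ := RCLike.re_le_norm _
  refine h1.trans ?_
  have h2 : ‖(inner ℂ x (Matrix.toEuclideanLin M x) : ℂ)‖ ≤ ‖x‖ * ‖Matrix.toEuclideanLin M x‖ :=
    norm_inner_le_norm _ _
  refine h2.trans ?_
  have h3 : ‖Matrix.toEuclideanLin M x‖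
      ≤ specNorm M * ‖x‖ := by
    have := (LinearMap.toContinuousLinearMap (Matrix.toEuclideanLin M)).le_opNorm x
    simpa only [specNorm, LinearMap.coe_toContinuousLinearMap'] using this
  calc ‖x‖ * ‖Matrix.toEuclideanLin M x‖ ≤ ‖x‖ * (specNorm M * ‖x‖) :=
        mul_le_mul_of_nonneg_left h3 (norm_nonneg _)
    _ = specNorm M * ‖x‖ ^ 2 := by ring

lemma weyl_upper {A B : Matrix (Fin n) (Fin n) ℂ} (hA : A.IsHermitian) (hB : B.IsHermitian)
    (σ ν : Fin n → ℝ) (e e' : Fin n ≃ Fin n)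
    (hσ : σ = hA.eigenvalues ∘ e) (hν : ν = hB.eigenvalues ∘ e')
    (hs : Antitone σ) (hs' : Antitone ν) (i : Fin n) :
    ν i ≤ σ i + specNorm (B - A) := by
  classical
  set S : Finset (Fin n) := (Finset.Iic i).image e'
  set T : Finset (Fin n) := (Finset.Ici i).image e
  have hScard : S.card = (i : ℕ) + 1 := by
    rw [Finset.card_image_of_injective _ e'.injective, Fin.card_Iic]
  have hTcard : T.card = n - (i : ℕ) := by
    rw [Finset.card_image_of_injective _ e.injective, Fin.card_Ici]
  obtain ⟨x, hxne, hxB, hxA⟩ := exists_nonzero_inter hB hA S T (by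
    have := i.isLt; omega)
  have hBq : ν i * ‖x‖ ^ 2 ≤ RCLike.re (inner ℂ x (Matrix.toEuclideanLin B x) : ℂ) := by
    refine quad_ge hB S (ν i) ?_ x hxB
    intro j hj
    obtain ⟨l, hl, rfl⟩ := Finset.mem_image.mp hj
    have : hB.eigenvalues (e' l) = ν l := by rw [hν]; rfl
    rw [this]
    exact hs' (Finset.mem_Iic.mp hl)
  have hAq : RCLike.re (inner ℂ x (Matrix.toEuclideanLin A x) : ℂ) ≤ σ i * ‖x‖ ^ 2 := by
    refine quad_le hA T (σ i) ?_ x hxA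
    intro j hj
    obtain ⟨l, hl, rfl⟩ := Finset.mem_image.mp hj
    have : hA.eigenvalues (e l) = σ l := by rw [hσ]; rfl
    rw [this]
    exact hs (Finset.mem_Ici.mp hl)
  have hdiff : RCLike.re (inner ℂ x (Matrix.toEuclideanLin (B - A) x) : ℂ)
      ≤ specNorm (B - A) * ‖x‖ ^ 2 := quad_specNorm _ x
  have hsplit : RCLike.re (inner ℂ x (Matrix.toEuclideanLin B x) : ℂ)
      = RCLike.re (inner ℂ x (Matrix.toEuclideanLin A x) : ℂ)
        + RCLike.re (inner ℂ x (Matrix.toEuclideanLin (B - A) x) : ℂ) := by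
    rw [map_sub]
    simp only [LinearMap.sub_apply, inner_sub_right, map_sub]
    ring
  have hx2 : (0:ℝ) < ‖x‖ ^ 2 := by
    have := norm_pos_iff.mpr hxne
    positivity
  have : ν i * ‖x‖ ^ 2 ≤ (σ i + specNorm (B - A)) * ‖x‖ ^ 2 := by nlinarith
  exact le_of_mul_le_mul_right (by linarith) hx2

end weyl

lemma specNorm_sub_comm {n : ℕ} (A B : Matrix (Fin n) (Fin n) ℂ) :
    specNorm (A - B) = specNorm (B - A) := by
  unfold specNorm
  rw [show A - B = -(B - A) from (neg_sub B A).symm, map_neg, map_neg, norm_neg]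

theorem eigenvalue_ratio_model_selection (L k : ℕ) (hk : 0 < k) (hkL : k + 1 < L)
    (C Ch : Matrix (Fin L) (Fin L) ℂ)
    (hC : C.IsHermitian) (hCh : Ch.IsHermitian)
    (hCpsd : C.PosSemidef) (hChpsd : Ch.PosSemidef)
    (hrank : C.rank = k)
    (σ σh : Fin L → ℝ) (e e' : Fin L ≃ Fin L)
    (hσ : σ = hC.eigenvalues ∘ e) (hσh : σh = hCh.eigenvalues ∘ e')
    (hanti : Antitone σ) (hanti' : Antitone σh)
    (E : ℝ) (hE : E = specNorm (Ch - C))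
    (hEsmall : E < σ ⟨k - 1, by omega⟩ / 2) :
    (E < σh ⟨k - 1, by omega⟩ ∧ σh ⟨k, by omega⟩ ≤ E) ∧
    (0 < σh ⟨k, by omega⟩ →
      (∀ i : ℕ, (hi : i + 1 < k) →
        (σ ⟨i, by omega⟩ + E) / (σ ⟨i + 1, by omega⟩ - E) < (σ ⟨k - 1, by omega⟩ - E) / E) →
      ∀ i : ℕ, (hiL : i + 1 < L) → i ≠ k - 1 → σ ⟨k - 1, by omega⟩ / 2 < σh ⟨i, by omega⟩ →
        σh ⟨i, by omega⟩ / σh ⟨i + 1, by omega⟩ <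
          σh ⟨k - 1, by omega⟩ / σh ⟨k, by omega⟩) := by
  have hEnn : 0 ≤ E := hE ▸ norm_nonneg _
  have hup : ∀ i, σh i ≤ σ i + E := by
    intro i
    have := weyl_upper hC hCh σ σh e e' hσ hσh hanti hanti' i
    rw [← hE] at this
    exact this
  have hlo : ∀ i, σ i ≤ σh i + E := by
    intro i
    have := weyl_upper hCh hC σh σ e' e hσh hσ hanti' hanti i
    rw [specNorm_sub_comm, ← hE] at this
    exact this
  -- nonnegativity of σ
  have hnonneg : ∀ j, 0 ≤ σ j := by
    intro j
    rw [hσ]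
    exact hCpsd.eigenvalues_nonneg (e j)
  -- σ at index k is zero
  have hcard : Fintype.card {j : Fin L // σ j ≠ 0} = k := by
    have h1 := hC.rank_eq_card_non_zero_eigs
    rw [hrank] at h1
    have h2 : Fintype.card {j : Fin L // σ j ≠ 0}
        = Fintype.card {i : Fin L // hC.eigenvalues i ≠ 0} :=
      Fintype.card_congr (Equiv.subtypeEquiv e (fun j => by rw [hσ]; rfl))
    omega
  have hσk : σ ⟨k, by omega⟩ = 0 := by
    by_contra h
    have hsub : Finset.Iic (⟨k, by omega⟩ : Fin L) ⊆ Finset.univ.filter (fun j => σ j ≠ 0) := by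
      intro j hj
      rw [Finset.mem_filter]
      refine ⟨Finset.mem_univ _, ?_⟩
      have h1 : σ ⟨k, by omega⟩ ≤ σ j := hanti (Finset.mem_Iic.mp hj)
      have h2 := hnonneg ⟨k, by omega⟩
      intro h0
      rw [h0] at h1
      exact h (le_antisymm h1 h2)
    have hc1 : (Finset.Iic (⟨k, by omega⟩ : Fin L)).card = k + 1 := Fin.card_Iic _
    have hc2 : (Finset.univ.filter (fun j : Fin L => σ j ≠ 0)).card = k := by
      rw [← hcard, Fintype.card_subtype]
    have := Finset.card_le_card hsub
    omega
  constructor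
  · constructor
    · have h1 := hlo ⟨k - 1, by omega⟩
      linarith
    · have h1 := hup ⟨k, by omega⟩
      rw [hσk] at h1
      linarith
  · intro hpos hratio i hiL hne hbig
    have hEpos : 0 < E := by
      have h1 := hup ⟨k, by omega⟩
      rw [hσk] at h1
      linarith
    by_cases hik : i < k - 1
    · -- main case
      have hik1 : i + 1 < k := by omega
      have R1 := hratio i hik1
      have hσi1 : σ ⟨k - 1, by omega⟩ ≤ σ ⟨i + 1, by omega⟩ := hanti (by simp [Fin.mk_le_mk]; omega)
      have hden : (0:ℝ) < σ ⟨i + 1, by omega⟩ - E := by linarith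
      have hnum := hup ⟨i, by omega⟩
      have hden2 := hlo ⟨i + 1, by omega⟩
      have step1 : σh ⟨i, by omega⟩ / σh ⟨i + 1, by omega⟩
          ≤ (σ ⟨i, by omega⟩ + E) / (σ ⟨i + 1, by omega⟩ - E) := by
        apply div_le_div₀ (by linarith [hnonneg ⟨i, by omega⟩]) hnum hden (by linarith)
      have hk1lo := hlo ⟨k - 1, by omega⟩
      have hkup := hup ⟨k, by omega⟩
      rw [hσk] at hkup
      have step3 : (σ ⟨k - 1, by omega⟩ - E) / E ≤ σh ⟨k - 1, by omega⟩ / σh ⟨k, by omega⟩ := by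
        apply div_le_div₀ (by linarith) (by linarith) hpos (by linarith)
      exact lt_of_le_of_lt step1 (lt_of_lt_of_le R1 step3)
    · -- i ≥ k : contradiction with σh i being big
      exfalso
      have hki : k ≤ i := by omega
      have h1 : σh ⟨i, by omega⟩ ≤ σh ⟨k, by omega⟩ := hanti' (by simp [Fin.mk_le_mk]; omega)
      have h2 := hup ⟨k, by omega⟩
      rw [hσk] at h2
      linarith
end
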